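/- Let T be an inverse semigroup, A a T-module with structure (θ, η), and K = {(e, w) ∈ E(T) × FG(T) | e ≤ ν(w)}. Let N = {(a, e, w) ∈ A × E(T) × FG(T) | a ∈ A_{θ(e)} and e ≤ ν(w)} with coordinatewise multiplication, and define i(a) = (a, θ⁻¹(a a⁻¹), ε), α(e, ε) = (θ(e), e, ε), β(a, e, w) = (e, w). Then: (1) i is an injective homomorphism A → N with i(A) = β⁻¹(E(S)); (2) α is an isomorphism E(S) → E(N); (3) β is an idempotent-separating homomorphism N → S with β(N) = π⁻¹(E(T)) and β|_{E(N)} = α⁻¹, where S = {(t,w) | t ≤ ν(w)} and π(t,w) = t. -/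

import Mathlib

/-- An inverse semigroup: every element `s` has a (unique) inverse `s⁻¹`
with `s * s⁻¹ * s = s` and `s⁻¹ * s * s⁻¹ = s⁻¹`. -/
class InverseSemigroup (S : Type*) extends Semigroup S, Inv S where
  mul_inv_mul : ∀ s : S, s * s⁻¹ * s = s
  inv_mul_inv : ∀ s : S, s⁻¹ * s * s⁻¹ = s⁻¹
  inv_unique : ∀ s t : S, s * t * s = s → t * s * t = t → t = s⁻¹

namespace InverseSemigroup

/-- The set of idempotents of a multiplicative structure. -/
def E (S : Type*) [Mul S] : Set S := {e | e * e = e}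

/-- The natural partial order: `s ≤ t` iff `s = s * s⁻¹ * t`. -/
def nle {S : Type*} [Mul S] [Inv S] (s t : S) : Prop := s = s * s⁻¹ * t

/-- `r s = s * s⁻¹`. -/
def r {S : Type*} [Mul S] [Inv S] (s : S) : S := s * s⁻¹

/-- A Clifford semigroup (semilattice of groups): idempotents are central. -/
def IsClifford (S : Type*) [Mul S] : Prop := ∀ e ∈ E S, ∀ s : S, e * s = s * e

end InverseSemigroup

open InverseSemigroup

/-- Evaluate a word over the alphabet `T ⊔ T⁻¹` (encoded as `List (T × Bool)`,
with `(x, true) = [x]` and `(x, false) = [x]⁻¹`) in `T¹ = WithOne T`;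
the empty word evaluates to `1`. -/
def evalWord {T : Type*} [InverseSemigroup T] (l : List (T × Bool)) : WithOne T :=
  l.foldr (fun p acc => (↑(if p.2 then p.1 else p.1⁻¹) : WithOne T) * acc) 1

/-- The map `ν : FG(T) → T¹` evaluating the reduced word of an element of the free
group on `T`; `ν(ε) = 1`. -/
def nu {T : Type*} [InverseSemigroup T] [DecidableEq T] (w : FreeGroup T) : WithOne T :=
  evalWord (FreeGroup.toWord w)

/-- Membership in the `E`-unitary cover `S = {(t,w) ∈ T × FG(T) | t ≤ ν(w)}`. -/
def Pcov {T : Type*} [InverseSemigroup T] [DecidableEq T] (p : T × FreeGroup T) : Prop :=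
  nle (p.1 : WithOne T) (nu p.2)

/-- Membership in `N = {(a,e,w) | a ∈ A_{θ(e)}, e ∈ E(T), e ≤ ν(w)}`. -/
def QN {T A : Type*} [InverseSemigroup T] [InverseSemigroup A] [DecidableEq T]
    (θ : T → A) (n : A × T × FreeGroup T) : Prop :=
  n.2.1 ∈ E T ∧ n.1 * n.1⁻¹ = θ n.2.1 ∧ nle (n.2.1 : WithOne T) (nu n.2.2)

/-! An idempotent of `N` has an idempotent free-group coordinate, which is therefore `ε`, and an
idempotent `A`-coordinate `a`, so that `a = a a⁻¹ = θ(e)`; so `E(N)` is the image of `α` and is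
determined by its `T`-coordinate, which makes `β` idempotent-separating. That `i` is a homomorphism
rests on the commutativity of `A`, giving `(ab)(ab)⁻¹ = aa⁻¹ · bb⁻¹`, and on the idempotents of `T`
being closed under multiplication. -/

namespace InverseSemigroup

variable {S : Type*} [InverseSemigroup S]

theorem inv_inv (s : S) : s⁻¹⁻¹ = s :=
  (inv_unique s⁻¹ s (inv_mul_inv s) (mul_inv_mul s)).symm

theorem inv_eq_self_of_mem_E {e : S} (he : e ∈ E S) : e⁻¹ = e :=
  (inv_unique e e (by rw [he, he]) (by rw [he, he])).symm

theorem mul_inv_eq_self_of_mem_E {e : S} (he : e ∈ E S) : e * e⁻¹ = e := by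
  rw [inv_eq_self_of_mem_E he, he]

theorem mul_inv_mem_E (s : S) : s * s⁻¹ ∈ E S :=
  show s * s⁻¹ * (s * s⁻¹) = s * s⁻¹ by rw [← mul_assoc, mul_inv_mul]

theorem mul_mem_E {e f : S} (he : e ∈ E S) (hf : f ∈ E S) : e * f ∈ E S := by
  have he' : ∀ y : S, e * (e * y) = e * y := fun y => by rw [← mul_assoc, he]
  have hf' : ∀ y : S, f * (f * y) = f * y := fun y => by rw [← mul_assoc, hf]
  set x := (e * f)⁻¹
  have h₁ : e * (f * (x * (e * f))) = e * f := by
    simpa only [mul_assoc] using mul_inv_mul (e * f)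
  have h₂ : ∀ y : S, x * (e * (f * (x * y))) = x * y := fun y => by
    simpa only [mul_assoc] using congrArg (· * y) (inv_mul_inv (e * f))
  -- `f x e` is an inverse of `e f`, hence equal to `x`, and it is visibly idempotent.
  have hx : f * x * e = x := by
    refine inv_unique (e * f) (f * x * e) ?_ ?_ <;> simp only [mul_assoc, he', hf', h₁, h₂]
  have hxx : x * x = x := by
    rw [← hx]; simp only [mul_assoc, h₂]
  show e * f * (e * f) = e * f
  rw [← inv_inv (e * f), inv_eq_self_of_mem_E hxx, hxx]

theorem mul_inv_distrib_of_comm (hcomm : ∀ a b : S, a * b = b * a) (a b : S) :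
    (a * b)⁻¹ = a⁻¹ * b⁻¹ := by
  have : Std.Associative (α := S) (· * ·) := ⟨mul_assoc⟩
  have : Std.Commutative (α := S) (· * ·) := ⟨hcomm⟩
  refine (inv_unique (a * b) (a⁻¹ * b⁻¹) ?_ ?_).symm
  · calc a * b * (a⁻¹ * b⁻¹) * (a * b) = (a * a⁻¹ * a) * (b * b⁻¹ * b) := by ac_rfl
      _ = a * b := by rw [mul_inv_mul, mul_inv_mul]
  · calc a⁻¹ * b⁻¹ * (a * b) * (a⁻¹ * b⁻¹) = (a⁻¹ * a * a⁻¹) * (b⁻¹ * b * b⁻¹) := by ac_rfl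
      _ = a⁻¹ * b⁻¹ := by rw [inv_mul_inv, inv_mul_inv]

theorem mul_mul_inv_of_comm (hcomm : ∀ a b : S, a * b = b * a) (a b : S) :
    a * b * (a * b)⁻¹ = a * a⁻¹ * (b * b⁻¹) := by
  rw [mul_inv_distrib_of_comm hcomm, mul_assoc, mul_assoc, ← mul_assoc b, hcomm b a⁻¹, mul_assoc]

end InverseSemigroup

theorem eq_one_of_mem_E {G : Type*} [Group G] {g : G} (hg : g ∈ E G) : g = 1 :=
  mul_eq_left.mp hg

open InverseSemigroup

section Cover

variable {T A : Type*} [InverseSemigroup T] [InverseSemigroup A]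

theorem theta_mem_E {θ : T → A} (hθmul : ∀ e ∈ E T, ∀ f ∈ E T, θ (e * f) = θ e * θ f)
    {e : T} (he : e ∈ E T) : θ e ∈ E A :=
  show θ e * θ e = θ e by rw [← hθmul e he e he, he]

theorem mk_theta_mul {θ : T → A} (hθmul : ∀ e ∈ E T, ∀ f ∈ E T, θ (e * f) = θ e * θ f)
    {e f : T} (he : e ∈ E T) (hf : f ∈ E T) :
    (θ (e * f), e * f, (1 : FreeGroup T)) = (θ e, e, 1) * (θ f, f, 1) := by
  rw [Prod.mk_mul_mk, Prod.mk_mul_mk, hθmul e he f hf, mul_one]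

theorem thetaInv_mul {θ : T → A} {θinv : A → T}
    (hθmul : ∀ e ∈ E T, ∀ f ∈ E T, θ (e * f) = θ e * θ f)
    (hθinv1 : ∀ e ∈ E T, θinv (θ e) = e) (hθinv2 : ∀ a ∈ E A, θ (θinv a) = a ∧ θinv a ∈ E T)
    {x y : A} (hx : x ∈ E A) (hy : y ∈ E A) : θinv (x * y) = θinv x * θinv y := by
  obtain ⟨hθx, hx'⟩ := hθinv2 x hx
  obtain ⟨hθy, hy'⟩ := hθinv2 y hy
  calc θinv (x * y) = θinv (θ (θinv x) * θ (θinv y)) := by rw [hθx, hθy]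
    _ = θinv x * θinv y := by rw [← hθmul _ hx' _ hy', hθinv1 _ (mul_mem_E hx' hy')]

theorem mk_thetaInv_mul {θ : T → A} {θinv : A → T} (hcomm : ∀ a b : A, a * b = b * a)
    (hθmul : ∀ e ∈ E T, ∀ f ∈ E T, θ (e * f) = θ e * θ f)
    (hθinv1 : ∀ e ∈ E T, θinv (θ e) = e) (hθinv2 : ∀ a ∈ E A, θ (θinv a) = a ∧ θinv a ∈ E T)
    (a b : A) :
    (a * b, θinv (a * b * (a * b)⁻¹), (1 : FreeGroup T)) =
      (a, θinv (a * a⁻¹), 1) * (b, θinv (b * b⁻¹), 1) := by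
  rw [Prod.mk_mul_mk, Prod.mk_mul_mk, mul_one, mul_mul_inv_of_comm hcomm,
    thetaInv_mul hθmul hθinv1 hθinv2 (mul_inv_mem_E a) (mul_inv_mem_E b)]

variable [DecidableEq T]

theorem nu_one : nu (1 : FreeGroup T) = 1 := by
  simp [nu, evalWord]

theorem nle_nu_one {e : T} (he : e ∈ E T) : nle (e : WithOne T) (nu (1 : FreeGroup T)) := by
  rw [nu_one, nle, mul_one, ← WithOne.coe_inv, ← WithOne.coe_mul, mul_inv_eq_self_of_mem_E he]

theorem QN.theta_eq {θ : T → A} {n : A × T × FreeGroup T} (hn : QN θ n)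
    (hidem : n * n = n) : θ n.2.1 = n.1 := by
  rw [← hn.2.1, mul_inv_eq_self_of_mem_E (congrArg Prod.fst hidem)]

theorem QN.mk_theta_eq {θ : T → A} {n : A × T × FreeGroup T} (hn : QN θ n)
    (hidem : n * n = n) : (θ n.2.1, n.2.1, (1 : FreeGroup T)) = n := by
  rw [hn.theta_eq hidem, ← eq_one_of_mem_E (congrArg (·.2.2) hidem)]

theorem QN.eq_of_snd_fst_eq {θ : T → A} {m n : A × T × FreeGroup T} (hm : QN θ m) (hn : QN θ n)
    (hm' : m * m = m) (hn' : n * n = n) (h : m.2.1 = n.2.1) : m = n := by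
  rw [← hm.mk_theta_eq hm', ← hn.mk_theta_eq hn', h]

theorem qn_mk_theta {θ : T → A} (hθmul : ∀ e ∈ E T, ∀ f ∈ E T, θ (e * f) = θ e * θ f)
    {e : T} (he : e ∈ E T) {w : FreeGroup T} (hw : nle (e : WithOne T) (nu w)) :
    QN θ (θ e, e, w) :=
  ⟨he, mul_inv_eq_self_of_mem_E (theta_mem_E hθmul he), hw⟩

theorem mem_E_iff_exists_qn {θ : T → A} (hθmul : ∀ e ∈ E T, ∀ f ∈ E T, θ (e * f) = θ e * θ f)
    {p : T × FreeGroup T} (hp : Pcov p) :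
    p.1 ∈ E T ↔ ∃ n : A × T × FreeGroup T, QN θ n ∧ (n.2.1, n.2.2) = p :=
  ⟨fun he => ⟨(θ p.1, p.1, p.2), qn_mk_theta hθmul he hp, rfl⟩, fun ⟨_, hn, hnp⟩ => hnp ▸ hn.1⟩

theorem QN.mem_E_snd_iff {θ : T → A} {θinv : A → T} (hθinv1 : ∀ e ∈ E T, θinv (θ e) = e)
    (hθinv2 : ∀ a ∈ E A, θ (θinv a) = a ∧ θinv a ∈ E T) {n : A × T × FreeGroup T} (hn : QN θ n) :
    (n.2.1, n.2.2) * (n.2.1, n.2.2) = (n.2.1, n.2.2) ↔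
      ∃ a : A, (a, θinv (a * a⁻¹), (1 : FreeGroup T)) = n := by
  constructor
  · intro hidem
    refine ⟨n.1, ?_⟩
    rw [hn.2.1, hθinv1 _ hn.1, ← eq_one_of_mem_E (congrArg Prod.snd hidem)]
  · rintro ⟨a, rfl⟩
    rw [Prod.mk_mul_mk, (hθinv2 _ (mul_inv_mem_E a)).2, mul_one]

theorem qn_incl {θ : T → A} {θinv : A → T}
    (hθinv2 : ∀ a ∈ E A, θ (θinv a) = a ∧ θinv a ∈ E T) (a : A) :
    QN θ (a, θinv (a * a⁻¹), (1 : FreeGroup T)) :=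
  have h := hθinv2 _ (mul_inv_mem_E a)
  ⟨h.2, h.1.symm, nle_nu_one h.2⟩

end Cover

theorem cover_crossed_module_maps_general {T A : Type*}
    [InverseSemigroup T] [InverseSemigroup A] [DecidableEq T]
    (θ : T → A)
    (hAcomm : ∀ a b : A, a * b = b * a)
    (hθmul : ∀ e ∈ E T, ∀ f ∈ E T, θ (e * f) = θ e * θ f)
    (θinv : A → T)
    (hθinv1 : ∀ e ∈ E T, θinv (θ e) = e)
    (hθinv2 : ∀ a ∈ E A, θ (θinv a) = a ∧ θinv a ∈ E T) :
    let i : A → A × T × FreeGroup T := fun a => (a, θinv (a * a⁻¹), (1 : FreeGroup T))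
    let alpha : T → A × T × FreeGroup T := fun e => (θ e, e, (1 : FreeGroup T))
    let beta : A × T × FreeGroup T → T × FreeGroup T := fun n => (n.2.1, n.2.2)
    -- (1) i is an injective homomorphism A → N with image β⁻¹(E(S))
    (∀ a : A, QN θ (i a)) ∧
    Function.Injective i ∧
    (∀ a b : A, i (a * b) = i a * i b) ∧
    (∀ n : A × T × FreeGroup T, QN θ n →
      (beta n * beta n = beta n ↔ ∃ a : A, i a = n)) ∧
    -- (2) α is an isomorphism from E(S) = E(T) × {ε} onto E(N)
    (∀ e ∈ E T, QN θ (alpha e) ∧ alpha e * alpha e = alpha e) ∧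
    (∀ e ∈ E T, ∀ f ∈ E T, alpha e = alpha f → e = f) ∧
    (∀ e ∈ E T, ∀ f ∈ E T, alpha (e * f) = alpha e * alpha f) ∧
    (∀ n : A × T × FreeGroup T, QN θ n → n * n = n → ∃ e ∈ E T, alpha e = n) ∧
    -- (3) β is an idempotent-separating homomorphism with β(N) = π⁻¹(E(T))
    (∀ m n : A × T × FreeGroup T, beta (m * n) = beta m * beta n) ∧
    (∀ m n : A × T × FreeGroup T, QN θ m → QN θ n → m * m = m → n * n = n →
      beta m = beta n → m = n) ∧
    (∀ p : T × FreeGroup T, Pcov p →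
      (p.1 ∈ E T ↔ ∃ n : A × T × FreeGroup T, QN θ n ∧ beta n = p)) ∧
    -- β restricted to E(N) is the inverse of α
    (∀ n : A × T × FreeGroup T, QN θ n → n * n = n → alpha n.2.1 = n) := by
  intro i alpha beta
  refine ⟨qn_incl hθinv2, fun _ _ h => congrArg Prod.fst h,
    mk_thetaInv_mul hAcomm hθmul hθinv1 hθinv2, fun _ hn => hn.mem_E_snd_iff hθinv1 hθinv2,
    fun e he => ⟨qn_mk_theta hθmul he (nle_nu_one he), by rw [← mk_theta_mul hθmul he he, he]⟩,
    fun _ _ _ _ h => congrArg (·.2.1) h, fun _ he _ hf => mk_theta_mul hθmul he hf,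
    fun n hn hidem => ⟨n.2.1, hn.1, hn.mk_theta_eq hidem⟩, fun _ _ => rfl,
    fun _ _ hm hn hm' hn' h => hm.eq_of_snd_fst_eq hn hm' hn' (congrArg Prod.fst h),
    fun _ hp => mem_E_iff_exists_qn hθmul hp, fun _ hn hidem => hn.mk_theta_eq hidem⟩

/-- The maps `i(a) = (a, θ⁻¹(a a⁻¹), ε)`, `α(e,ε) = (θ(e), e, ε)` and
`β(a,e,w) = (e,w)` have the properties of the first maps of the crossed module
extension constructed from the `E`-unitary cover. -/
theorem cover_crossed_module_maps {T A : Type*}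
    [InverseSemigroup T] [InverseSemigroup A] [DecidableEq T]
    (θ : T → A) (η : T → A → A)
    (hAcomm : ∀ a b : A, a * b = b * a)
    (hθE : ∀ e ∈ E T, θ e ∈ E A)
    (hθinj : ∀ e ∈ E T, ∀ f ∈ E T, θ e = θ f → e = f)
    (hθsurj : ∀ a ∈ E A, ∃ e ∈ E T, θ e = a)
    (hθmul : ∀ e ∈ E T, ∀ f ∈ E T, θ (e * f) = θ e * θ f)
    (hηhom : ∀ t u : T, ∀ a : A, η (t * u) a = η t (η u a))
    (hηmul : ∀ t : T, ∀ a b : A, η t (a * b) = η t a * η t b)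
    (hη1 : ∀ e ∈ E T, ∀ a : A, η e a = θ e * a)
    (hη2 : ∀ t : T, ∀ e ∈ E T, η t (θ e) = θ (t * e * t⁻¹))
    (θinv : A → T)
    (hθinv1 : ∀ e ∈ E T, θinv (θ e) = e)
    (hθinv2 : ∀ a ∈ E A, θ (θinv a) = a ∧ θinv a ∈ E T) :
    let i : A → A × T × FreeGroup T := fun a => (a, θinv (a * a⁻¹), (1 : FreeGroup T))
    let alpha : T → A × T × FreeGroup T := fun e => (θ e, e, (1 : FreeGroup T))
    let beta : A × T × FreeGroup T → T × FreeGroup T := fun n => (n.2.1, n.2.2)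
    -- (1) i is an injective homomorphism A → N with image β⁻¹(E(S))
    (∀ a : A, QN θ (i a)) ∧
    Function.Injective i ∧
    (∀ a b : A, i (a * b) = i a * i b) ∧
    (∀ n : A × T × FreeGroup T, QN θ n →
      (beta n * beta n = beta n ↔ ∃ a : A, i a = n)) ∧
    -- (2) α is an isomorphism from E(S) = E(T) × {ε} onto E(N)
    (∀ e ∈ E T, QN θ (alpha e) ∧ alpha e * alpha e = alpha e) ∧
    (∀ e ∈ E T, ∀ f ∈ E T, alpha e = alpha f → e = f) ∧
    (∀ e ∈ E T, ∀ f ∈ E T, alpha (e * f) = alpha e * alpha f) ∧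
    (∀ n : A × T × FreeGroup T, QN θ n → n * n = n → ∃ e ∈ E T, alpha e = n) ∧
    -- (3) β is an idempotent-separating homomorphism with β(N) = π⁻¹(E(T))
    (∀ m n : A × T × FreeGroup T, beta (m * n) = beta m * beta n) ∧
    (∀ m n : A × T × FreeGroup T, QN θ m → QN θ n → m * m = m → n * n = n →
      beta m = beta n → m = n) ∧
    (∀ p : T × FreeGroup T, Pcov p →
      (p.1 ∈ E T ↔ ∃ n : A × T × FreeGroup T, QN θ n ∧ beta n = p)) ∧
    -- β restricted to E(N) is the inverse of α
    (∀ n : A × T × FreeGroup T, QN θ n → n * n = n → alpha n.2.1 = n) :=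
  cover_crossed_module_maps_general θ hAcomm hθmul θinv hθinv1 hθinv2
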